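/- arXiv:1703.01224 — 2 statements merged into one kernel-verified Lean document; each statement's English description precedes it below -/
import Mathlib

section
/- Let K be a nonnegative integer-valued, non-deterministic random variable with E[K] > 0 and E[K²] < ∞, α > 0, and suppose θ ∈ (0,1] satisfies 1 = (1/E[K])·E[K²·α/(1 + K·α·θ)]. Then θ > 1 − 1/(α·E[K]). -/
/-! For `α > 0` and `θ ≥ 0` the map `x ↦ x²α / (1 + xαθ)` is strictly convex on `[0, ∞)`.
Since `K` is not a.s. constant, strict Jensen turns the stationarity condition
`E[K²α / (1 + Kαθ)] = E[K]` into `E[K]²α / (1 + E[K]αθ) < E[K]`, that is `αE[K] < 1 + αθE[K]`. -/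

open MeasureTheory Set Function

theorem StrictConvexOn.map_integral_lt {Ω E : Type*} {_ : MeasurableSpace Ω} {μ : Measure Ω}
    [IsProbabilityMeasure μ] [NormedAddCommGroup E] [NormedSpace ℝ E] [CompleteSpace E]
    {s : Set E} {f : Ω → E} {g : E → ℝ} (hg : StrictConvexOn ℝ s g)
    (hgc : ContinuousOn g s) (hsc : IsClosed s) (hfs : ∀ᵐ ω ∂μ, f ω ∈ s) (hfi : Integrable f μ)
    (hgi : Integrable (g ∘ f) μ) (hf : ∀ c, ¬ f =ᵐ[μ] const Ω c) :
    g (∫ ω, f ω ∂μ) < ∫ ω, g (f ω) ∂μ := by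
  simpa only [average_eq_integral] using
    (hg.ae_eq_const_or_map_average_lt hgc hsc hfs hfi hgi).resolve_left (hf _)

theorem natCast_not_ae_eq_const {Ω : Type*} {_ : MeasurableSpace Ω} {μ : Measure Ω} [NeZero μ]
    {K : Ω → ℕ} (hK : ¬ ∃ c : ℕ, ∀ᵐ ω ∂μ, K ω = c) (c : ℝ) :
    ¬ (fun ω => (K ω : ℝ)) =ᵐ[μ] const Ω c := by
  intro hc
  obtain ⟨ω₀, hω₀⟩ := hc.exists
  exact hK ⟨K ω₀, hc.mono fun ω hω =>
    Nat.cast_injective (R := ℝ) (hω.trans hω₀.symm)⟩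

section SISResponse

variable {α θ : ℝ}

theorem one_add_mul_mul_pos (hα : 0 ≤ α) (hθ : 0 ≤ θ) {x : ℝ} (hx : 0 ≤ x) :
    0 < 1 + x * α * θ := by
  have := mul_nonneg (mul_nonneg hx hα) hθ
  linarith

theorem strictConvexOn_sq_mul_div_one_add_mul (hα : 0 < α) (hθ : 0 ≤ θ) :
    StrictConvexOn ℝ (Ici 0) fun x : ℝ => x ^ 2 * α / (1 + x * α * θ) := by
  refine ⟨convex_Ici 0, fun x hx y hy hxy a b ha hb hab => ?_⟩
  simp only [smul_eq_mul]
  have hu := one_add_mul_mul_pos hα.le hθ (mem_Ici.mp hx)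
  have hv := one_add_mul_mul_pos hα.le hθ (mem_Ici.mp hy)
  have hw := one_add_mul_mul_pos hα.le hθ
    (add_nonneg (mul_nonneg ha.le (mem_Ici.mp hx)) (mul_nonneg hb.le (mem_Ici.mp hy)))
  -- with `u = 1 + xαθ`, `v = 1 + yαθ` and `a + b = 1`:
  -- `a x²/u + b y²/v - (ax + by)²/(au + bv) = ab (xv - yu)² / (uv(au + bv))`, and `xv - yu = x - y`
  have gap : a * (x ^ 2 * α / (1 + x * α * θ)) + b * (y ^ 2 * α / (1 + y * α * θ))
      - (a * x + b * y) ^ 2 * α / (1 + (a * x + b * y) * α * θ)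
      = α * a * b * (x - y) ^ 2 /
        ((1 + x * α * θ) * (1 + y * α * θ) * (1 + (a * x + b * y) * α * θ)) := by
    obtain rfl : b = 1 - a := by linarith
    rw [mul_div_assoc', mul_div_assoc', div_add_div _ _ hu.ne' hv.ne',
      div_sub_div _ _ (mul_ne_zero hu.ne' hv.ne') hw.ne',
      div_eq_div_iff (mul_ne_zero (mul_ne_zero hu.ne' hv.ne') hw.ne')
        (mul_ne_zero (mul_ne_zero hu.ne' hv.ne') hw.ne')]
    ring
  have : 0 < α * a * b * (x - y) ^ 2 /
      ((1 + x * α * θ) * (1 + y * α * θ) * (1 + (a * x + b * y) * α * θ)) := by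
    have := sub_ne_zero.mpr hxy
    positivity
  linarith

theorem continuousOn_sq_mul_div_one_add_mul (hα : 0 ≤ α) (hθ : 0 ≤ θ) :
    ContinuousOn (fun x : ℝ => x ^ 2 * α / (1 + x * α * θ)) (Ici 0) :=
  ContinuousOn.div (by fun_prop) (by fun_prop) fun _ hx =>
    (one_add_mul_mul_pos hα hθ (mem_Ici.mp hx)).ne'

theorem integrable_sq_mul_div_one_add_mul {Ω : Type*} {_ : MeasurableSpace Ω} {μ : Measure Ω}
    {X : Ω → ℝ} (hX : AEStronglyMeasurable X μ) (hX0 : ∀ ω, 0 ≤ X ω)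
    (hsq : Integrable (fun ω => X ω ^ 2) μ) (hα : 0 ≤ α) (hθ : 0 ≤ θ) :
    Integrable (fun ω => X ω ^ 2 * α / (1 + X ω * α * θ)) μ := by
  refine (hsq.mul_const α).mono
    ((by fun_prop : Measurable fun x : ℝ => x ^ 2 * α / (1 + x * α * θ)).comp_aemeasurable
      hX.aemeasurable).aestronglyMeasurable (ae_of_all _ fun ω => ?_)
  have hnum : 0 ≤ X ω ^ 2 * α := by positivity
  rw [Real.norm_of_nonneg (div_nonneg hnum (one_add_mul_mul_pos hα hθ (hX0 ω)).le),
    Real.norm_of_nonneg hnum]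
  exact div_le_self hnum (le_add_of_nonneg_right (mul_nonneg (mul_nonneg (hX0 ω) hα) hθ))

end SISResponse

theorem equilibrium_jensen_lower_bound_general {Ω : Type*} [MeasureSpace Ω]
    [IsProbabilityMeasure (volume : Measure Ω)] (K : Ω → ℕ)
    (hmean : 0 < ∫ ω, (K ω : ℝ))
    (hsq : Integrable (fun ω => (K ω : ℝ) ^ 2))
    (hnondet : ¬ ∃ c : ℕ, ∀ᵐ ω ∂(volume : Measure Ω), K ω = c)
    (α : ℝ) (hα : 0 < α) (θ : ℝ) (hθ : θ ∈ Set.Ioc (0:ℝ) 1)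
    (heq : 1 = (1 / ∫ ω, (K ω : ℝ)) *
      ∫ ω, (K ω : ℝ) ^ 2 * α / (1 + (K ω : ℝ) * α * θ)) :
    θ > 1 - 1 / (α * ∫ ω, (K ω : ℝ)) := by
  set m := ∫ ω, (K ω : ℝ)
  have hK : Integrable fun ω => (K ω : ℝ) := Integrable.of_integral_ne_zero hmean.ne'
  have hθ0 : 0 ≤ θ := hθ.1.le
  have hfixed : ∫ ω, (K ω : ℝ) ^ 2 * α / (1 + (K ω : ℝ) * α * θ) = m := by
    field_simp at heq
    exact heq.symm
  have hjensen : m ^ 2 * α / (1 + m * α * θ) < m :=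
    ((strictConvexOn_sq_mul_div_one_add_mul hα hθ0).map_integral_lt
      (continuousOn_sq_mul_div_one_add_mul hα.le hθ0) isClosed_Ici
      (ae_of_all _ fun ω => mem_Ici.mpr (Nat.cast_nonneg' (K ω))) hK
      (integrable_sq_mul_div_one_add_mul hK.aestronglyMeasurable
        (fun ω => Nat.cast_nonneg' (K ω)) hsq hα.le hθ0)
      (natCast_not_ae_eq_const hnondet)).trans_eq hfixed
  have hden := one_add_mul_mul_pos hα.le hθ0 hmean.le
  have hαm : 0 < α * m := mul_pos hα hmean
  have hlin : α * m < 1 + m * α * θ := by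
    rw [div_lt_iff₀ hden] at hjensen
    nlinarith
  rw [gt_iff_lt, sub_lt_comm, lt_div_iff₀ hαm]
  linarith

/-- Jensen lower bound for the equilibrium: θ > 1 − 1/(αE[K]). -/
theorem equilibrium_jensen_lower_bound {Ω : Type*} [MeasureSpace Ω]
    [IsProbabilityMeasure (volume : Measure Ω)] (K : Ω → ℕ) (hK : Measurable K)
    (hmean : 0 < ∫ ω, (K ω : ℝ))
    (hsq : Integrable (fun ω => (K ω : ℝ) ^ 2))
    (hnondet : ¬ ∃ c : ℕ, ∀ᵐ ω ∂(volume : Measure Ω), K ω = c)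
    (α : ℝ) (hα : 0 < α) (θ : ℝ) (hθ : θ ∈ Set.Ioc (0:ℝ) 1)
    (heq : 1 = (1 / ∫ ω, (K ω : ℝ)) *
      ∫ ω, (K ω : ℝ) ^ 2 * α / (1 + (K ω : ℝ) * α * θ)) :
    θ > 1 - 1 / (α * ∫ ω, (K ω : ℝ)) :=
  equilibrium_jensen_lower_bound_general K hmean hsq hnondet α hα θ hθ heq
end

section
/- Let K ~ Poisson(μ) with μ > 0, let α > 0 with α(1+μ) ≥ 1, and let θ* ∈ (0,1] be the solution of 1 = (1/μ)·E[K²α/(1+Kαθ*)] (if it exists). Then θ* ≥ 1 − 1/(αμ). -/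
lemma exp_tsum' (x : ℝ) : ∑' n : ℕ, x ^ n / n.factorial = Real.exp x := by
  rw [Real.exp_eq_exp_ℝ, NormedSpace.exp_eq_tsum_div]

lemma kp_succ (x : ℝ) : (fun k : ℕ => ((k + 1 : ℕ) : ℝ) * (x ^ (k + 1) / (k + 1).factorial))
    = fun k : ℕ => x * (x ^ k / k.factorial) := by
  funext k
  have h : ((k + 1).factorial : ℝ) = (k + 1) * k.factorial := by
    rw [Nat.factorial_succ]; push_cast; ring
  have hk : ((k:ℝ) + 1) ≠ 0 := by positivity
  have hfac : (k.factorial : ℝ) ≠ 0 := by positivity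
  push_cast
  rw [h]
  field_simp
  ring

lemma summable_kp (x : ℝ) : Summable (fun k : ℕ => (k : ℝ) * (x ^ k / k.factorial)) := by
  rw [← summable_nat_add_iff 1]
  have := kp_succ x
  push_cast at this ⊢
  rw [this]
  exact (Real.summable_pow_div_factorial x).mul_left x

lemma tsum_kp (x : ℝ) : ∑' k : ℕ, (k : ℝ) * (x ^ k / k.factorial) = x * Real.exp x := by
  rw [Summable.tsum_eq_zero_add (summable_kp x)]
  have := kp_succ x
  push_cast at this ⊢
  rw [this]
  simp only [Nat.cast_zero, zero_mul, zero_add]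
  rw [tsum_mul_left, exp_tsum']

/-- Jensen lower bound for the Poisson-degree equilibrium: θ* ≥ 1 − 1/(αμ). -/
theorem poisson_equilibrium_lower_bound (μ α θ : ℝ) (hμ : 0 < μ) (hα : 0 < α)
    (hthr : α * (1 + μ) ≥ 1) (hθ : θ ∈ Set.Ioc (0:ℝ) 1)
    (heq : 1 = (1 / μ) * ∑' k : ℕ,
      ((k : ℝ) ^ 2 * α / (1 + (k : ℝ) * α * θ)) *
        (Real.exp (-μ) * μ ^ k / (Nat.factorial k))) :
    θ ≥ 1 - 1 / (α * μ) := by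
  obtain ⟨hθ0, hθ1⟩ := hθ
  set p : ℕ → ℝ := fun k => Real.exp (-μ) * μ ^ k / k.factorial with hp
  set f : ℕ → ℝ := fun k => (k : ℝ) ^ 2 * α / (1 + (k : ℝ) * α * θ) with hf
  have hD2 : 0 < 1 + μ * α * θ := by positivity
  have hppos : ∀ k, 0 ≤ p k := by
    intro k
    have : (0:ℝ) < (k.factorial : ℝ) := by positivity
    simp only [hp]
    positivity
  have hpeq : p = fun k => Real.exp (-μ) * (μ ^ k / k.factorial) := by
    funext k; simp only [hp]; ring
  have hkpeq : (fun k : ℕ => (k : ℝ) * p k)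
      = fun k : ℕ => Real.exp (-μ) * ((k : ℝ) * (μ ^ k / k.factorial)) := by
    funext k; simp only [hp]; ring
  have hpsum : Summable p := by
    rw [hpeq]; exact (Real.summable_pow_div_factorial μ).mul_left _
  have hpt : ∑' k, p k = 1 := by
    rw [hpeq, tsum_mul_left, exp_tsum', ← Real.exp_add]; simp
  have hkpsum : Summable (fun k : ℕ => (k : ℝ) * p k) := by
    rw [hkpeq]; exact (summable_kp μ).mul_left _
  have hkpt : ∑' k : ℕ, (k : ℝ) * p k = μ := by
    rw [hkpeq, tsum_mul_left, tsum_kp, ← mul_assoc, mul_comm (Real.exp (-μ)) μ,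
      mul_assoc, ← Real.exp_add]
    simp
  by_cases hs : Summable (fun k => f k * p k)
  case neg =>
    rw [tsum_eq_zero_of_not_summable hs, mul_zero] at heq
    norm_num at heq
  have hT : ∑' k, f k * p k = μ := by
    have h2 := congrArg (fun x => μ * x) heq
    simp only [mul_one] at h2
    rw [one_div, ← mul_assoc, mul_inv_cancel₀ hμ.ne', one_mul] at h2
    exact h2.symm
  set B : ℝ := α * (2 * μ + μ ^ 2 * α * θ) / (1 + μ * α * θ) ^ 2 with hB
  set A : ℝ := μ ^ 2 * α / (1 + μ * α * θ) - B * μ with hA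
  have htang : ∀ k : ℕ, A + B * k ≤ f k := by
    intro k
    have hk0 : (0:ℝ) ≤ (k:ℝ) := Nat.cast_nonneg k
    have hD1 : 0 < 1 + (k : ℝ) * α * θ := by positivity
    have hdiff : f k - (A + B * k) =
        α * ((k:ℝ) - μ) ^ 2 / ((1 + (k : ℝ) * α * θ) * (1 + μ * α * θ) ^ 2) := by
      simp only [hf, hA, hB]
      field_simp
      ring
    have hpos : 0 ≤ α * ((k:ℝ) - μ) ^ 2 / ((1 + (k : ℝ) * α * θ) * (1 + μ * α * θ) ^ 2) := by
      positivity
    linarith [hdiff ▸ hpos]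
  have hLsum : Summable (fun k : ℕ => (A + B * k) * p k) := by
    have heq2 : (fun k : ℕ => (A + B * (k:ℝ)) * p k)
        = fun k => A * p k + B * ((k : ℝ) * p k) := by
      funext k; ring
    rw [heq2]
    exact (hpsum.mul_left A).add (hkpsum.mul_left B)
  have hL : ∑' k : ℕ, (A + B * k) * p k = A + B * μ := by
    have heq2 : (fun k : ℕ => (A + B * (k:ℝ)) * p k)
        = fun k => A * p k + B * ((k : ℝ) * p k) := by
      funext k; ring
    rw [heq2, Summable.tsum_add (hpsum.mul_left A) (hkpsum.mul_left B), tsum_mul_left,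
      tsum_mul_left, hpt, hkpt, mul_one]
  have hle : A + B * μ ≤ μ := by
    rw [← hL, ← hT]
    exact Summable.tsum_le_tsum (fun k => mul_le_mul_of_nonneg_right (htang k) (hppos k)) hLsum hs
  have hle2 : μ ^ 2 * α / (1 + μ * α * θ) ≤ μ := by
    rw [hA] at hle; linarith
  have hle3 : μ ^ 2 * α ≤ μ * (1 + μ * α * θ) := by
    rw [div_le_iff₀ hD2] at hle2; linarith
  have hle4 : μ * α ≤ 1 + μ * α * θ := by
    nlinarith
  have hαμ : 0 < α * μ := mul_pos hα hμ
  rw [ge_iff_le, sub_le_iff_le_add, ← sub_le_iff_le_add', le_div_iff₀ hαμ]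
  nlinarith
end
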